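/- arXiv:2101.05497 — 2 statements merged into one kernel-verified Lean document; each statement's English description precedes it below -/
import Mathlib

section
/- Let (Y_1,…,Y_{n+1}) be a Σ_q-family on a complex Hilbert space H and let ξ∈H be a unit vector with Y_iξ = 0 for all 1≤i≤n and Y_{n+1}ξ = λξ for some λ∈ℂ with |λ| = 1. For k∈ℕⁿ define |k⟩_ξ := ((q²;q²)_{k_1}⋯(q²;q²)_{k_{n-1}}(q⁴;q⁴)_{k_n})^{-1/2} (Y_1*)^{k_1}⋯(Y_n*)^{k_n} ξ. Then the family {|k⟩_ξ : k∈ℕⁿ} is orthonormal: ⟨|j⟩_ξ, |k⟩_ξ⟩ = δ_{jk} for all j,k∈ℕⁿ. -/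
open ContinuousLinearMap

noncomputable section

abbrev lpH (n : ℕ) : Type := lp (fun _ : Fin n → ℕ => ℂ) 2

def basisE {n : ℕ} (k : Fin n → ℕ) : lpH n := lp.single 2 k 1

/-- A `Σ_q`-family: relations (R1)-(R5). Index `i : Fin (n+1)` corresponds to `Y_{i+1}`. -/
def IsSigmaQFamily (q : ℝ) {n : ℕ} {H : Type*} [NormedAddCommGroup H]
    [InnerProductSpace ℂ H] [CompleteSpace H]
    (Y : Fin (n + 1) → H →L[ℂ] H) : Prop :=
  (∀ i j : Fin (n + 1), j < i → ¬((i : ℕ) = n ∧ (j : ℕ) + 1 = n) →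
      Y i * Y j = ((q : ℂ))⁻¹ • (Y j * Y i) ∧
      adjoint (Y i) * Y j = ((q : ℂ))⁻¹ • (Y j * adjoint (Y i))) ∧
  (∀ j : Fin (n + 1), (j : ℕ) + 1 = n →
      Y (Fin.last n) * Y j = (((q : ℂ))⁻¹ ^ 2) • (Y j * Y (Fin.last n)) ∧
      adjoint (Y (Fin.last n)) * Y j = (((q : ℂ))⁻¹ ^ 2) • (Y j * adjoint (Y (Fin.last n)))) ∧
  (∀ i : Fin (n + 1), (i : ℕ) + 1 ≠ n →
      Y i * adjoint (Y i) - adjoint (Y i) * Y i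
        = ((1 - q ^ 2 : ℝ) : ℂ) • ∑ k ∈ Finset.Ioi i, adjoint (Y k) * Y k) ∧
  (∀ i : Fin (n + 1), (i : ℕ) + 1 = n →
      Y i * adjoint (Y i) - adjoint (Y i) * Y i
        = ((1 - q ^ 4 : ℝ) : ℂ) • (adjoint (Y (Fin.last n)) * Y (Fin.last n))) ∧
  (∑ i, adjoint (Y i) * Y i = 1)

/-- The representation `π_λ` on `ℓ²(ℕⁿ)`, described by its action on the canonical
orthonormal basis. Index `i : Fin n` (via `castSucc`) corresponds to `Y_{i+1}`,
and `Fin.last n` corresponds to `Y_{n+1}`. -/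
def IsPiRep (q : ℝ) {n : ℕ} (lam : ℂ) (Y : Fin (n + 1) → lpH n →L[ℂ] lpH n) : Prop :=
  (∀ i : Fin n, (i : ℕ) + 1 < n → ∀ k : Fin n → ℕ,
      Y i.castSucc (basisE k)
        = ((q ^ (∑ j ∈ Finset.Iio i, k j) * Real.sqrt (1 - q ^ (2 * k i)) : ℝ) : ℂ)
            • basisE (Function.update k i (k i - 1))) ∧
  (∀ i : Fin n, (i : ℕ) + 1 = n → ∀ k : Fin n → ℕ,
      Y i.castSucc (basisE k)
        = ((q ^ (∑ j ∈ Finset.Iio i, k j) * Real.sqrt (1 - q ^ (4 * k i)) : ℝ) : ℂ)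
            • basisE (Function.update k i (k i - 1))) ∧
  (∀ k : Fin n → ℕ,
      Y (Fin.last n) (basisE k)
        = (lam * (q : ℂ) ^ (∑ j : Fin n, if (j : ℕ) + 1 = n then 2 * k j else k j))
            • basisE k)

/-- Irreducibility: the only closed invariant subspaces are `⊥` and `⊤`. -/
def IsIrreducibleFamily {n : ℕ} {H : Type*} [NormedAddCommGroup H]
    [InnerProductSpace ℂ H] [CompleteSpace H]
    (Y : Fin (n + 1) → H →L[ℂ] H) : Prop :=
  ∀ V : Submodule ℂ H, IsClosed (V : Set H) →
    (∀ i : Fin (n + 1), ∀ v ∈ V, Y i v ∈ V ∧ adjoint (Y i) v ∈ V) →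
    V = ⊥ ∨ V = ⊤
/-- The q-shifted factorial `(a;b)_ℓ = ∏_{i=0}^{ℓ-1} (1 - a bⁱ)`. -/
def qPoch (a b : ℝ) (l : ℕ) : ℝ := ∏ i ∈ Finset.range l, (1 - a * b ^ i)

/-- The vector `|k⟩_ξ`. -/
def ket (q : ℝ) {n : ℕ} {H : Type*} [NormedAddCommGroup H]
    [InnerProductSpace ℂ H] [CompleteSpace H]
    (Y : Fin (n + 1) → H →L[ℂ] H) (ξ : H) (k : Fin n → ℕ) : H :=
  (((Real.sqrt (∏ i : Fin n,
      if (i : ℕ) + 1 = n then qPoch (q ^ 4) (q ^ 4) (k i) else qPoch (q ^ 2) (q ^ 2) (k i)))⁻¹ : ℝ) : ℂ) •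
    (List.ofFn fun i : Fin n => (adjoint (Y i.castSucc)) ^ (k i)).prod ξ


/-!
Write `B i = (Y i)*` for `i < n` and `ρ i = q²` (`ρ i = q⁴` for the last one). By (R1), `Y i`
`q`-commutes past every `B l` with `l ≠ i`, so it kills `B^k ξ` when `k i = 0`. By (R3)/(R4),
`Y i B i = B i Y i + (1 - ρ i) C i` with `C i = ∑_{m > i} (Y m)* Y m`; by (R1)/(R2)
`C i B i = ρ i B i C i`, and by (R5) `C i` fixes `B^k ξ` whenever `k` vanishes up to `i`.
Hence `Y i B^k ξ = (1 - ρ i ^ k i) B^(k - e i) ξ` when `i` is the first index where `k` is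
nonzero, and moving `B i` across the inner product gives
`⟪B^j ξ, B^k ξ⟫ = δ_jk ∏ (ρ i; ρ i)_(k i)` by induction on `|j| + |k|`.
-/

section QCommute

variable {R M : Type*} [CommSemiring R] [Semiring M] [Algebra R M]

theorem mul_mul_eq_smul_of_mul_eq_smul {A X Z : M} {c d : R}
    (hX : A * X = c • (X * A)) (hZ : A * Z = d • (Z * A)) :
    A * (X * Z) = (c * d) • (X * Z * A) := by
  rw [← mul_assoc, hX, smul_mul_assoc, mul_assoc, hZ, mul_smul_comm, smul_smul, mul_assoc]

theorem mul_mul_eq_smul_of_mul_eq_smul' {B X Z : M} {c d : R}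
    (hZ : Z * B = d • (B * Z)) (hX : X * B = c • (B * X)) :
    Z * X * B = (c * d) • (B * (Z * X)) := by
  rw [mul_assoc, hX, mul_smul_comm, ← mul_assoc, hZ, smul_mul_assoc, smul_smul, mul_assoc]

theorem mul_pow_eq_smul_of_mul_eq_smul {A B : M} {c : R} (h : A * B = c • (B * A)) (m : ℕ) :
    A * B ^ m = c ^ m • (B ^ m * A) := by
  induction m with
  | zero => simp
  | succ m ih => rw [pow_succ, pow_succ, mul_mul_eq_smul_of_mul_eq_smul ih h]

theorem mul_prod_ofFn_eq_smul {n : ℕ} {A : M} {f : Fin n → M} {c : Fin n → R}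
    (h : ∀ i, A * f i = c i • (f i * A)) :
    A * (List.ofFn f).prod = (∏ i, c i) • ((List.ofFn f).prod * A) := by
  induction n with
  | zero => simp
  | succ n ih =>
    rw [List.ofFn_succ, List.prod_cons, Fin.prod_univ_succ,
      mul_mul_eq_smul_of_mul_eq_smul (h 0) (ih fun i => h i.succ)]

end QCommute

theorem List.prod_ofFn_eq_mul_update_one {M : Type*} [Monoid M] {n : ℕ} {f : Fin n → M}
    {i : Fin n} (hf : ∀ l < i, f l = 1) :
    (List.ofFn f).prod = f i * (List.ofFn (Function.update f i 1)).prod := by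
  induction n with
  | zero => exact i.elim0
  | succ n ih =>
    cases i using Fin.cases with
    | zero => simp [List.ofFn_succ]
    | succ i =>
      have hf0 : f 0 = 1 := hf 0 (Fin.succ_pos i)
      have := ih (f := Fin.tail f) (i := i) fun l hl => hf l.succ (Fin.succ_lt_succ_iff.mpr hl)
      rw [List.ofFn_succ, List.ofFn_succ, List.prod_cons, List.prod_cons, hf0, one_mul,
        Function.update_of_ne (Fin.succ_ne_zero i).symm, hf0, one_mul]
      exact this.trans (by rw [← Fin.tail_update_succ]; rfl)

theorem Function.update_pred_eq_update_pred_iff {ι : Type*} [DecidableEq ι] {j k : ι → ℕ}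
    {i : ι} (hj : j i ≠ 0) (hk : k i ≠ 0) :
    Function.update j i (j i - 1) = Function.update k i (k i - 1) ↔ j = k := by
  refine ⟨fun h => ?_, fun h => h ▸ rfl⟩
  have hi : j i = k i := by
    have := congrFun h i
    simp only [Function.update_self] at this
    omega
  funext l
  rcases eq_or_ne l i with rfl | hl
  · exact hi
  · simpa [Function.update_of_ne hl] using congrFun h l

theorem Finset.sum_update_pred_lt {ι : Type*} [Fintype ι] [DecidableEq ι] {j k : ι → ℕ}
    {i : ι} (hj : j i ≠ 0) :
    ∑ l, (Function.update j i (j i - 1) l + Function.update k i (k i - 1) l)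
      < ∑ l, (j l + k l) := by
  refine Finset.sum_lt_sum (fun l _ => ?_) ⟨i, Finset.mem_univ i, ?_⟩
  · rcases eq_or_ne l i with rfl | hl
    · simp only [Function.update_self]
      omega
    · simp [Function.update_of_ne hl]
  · simp only [Function.update_self]
    omega

theorem Fin.Ioi_castSucc_eq_singleton_last {n : ℕ} {i : Fin n} (h : (i : ℕ) + 1 = n) :
    Finset.Ioi i.castSucc = {Fin.last n} := by
  ext m
  simp only [Finset.mem_Ioi, Finset.mem_singleton, Fin.lt_def, Fin.ext_iff,
    Fin.val_castSucc, Fin.val_last]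
  omega

theorem ContinuousLinearMap.apply_pow_succ_apply_of_mul_eq_add
    {𝕜 E : Type*} [NontriviallyNormedField 𝕜] [NormedAddCommGroup E] [NormedSpace 𝕜 E]
    {A B C : E →L[𝕜] E} {ρ : 𝕜} (hAB : A * B = B * A + (1 - ρ) • C)
    (hCB : C * B = ρ • (B * C)) {w : E} (hAw : A w = 0) (hCw : C w = w) (m : ℕ) :
    A ((B ^ (m + 1)) w) = (1 - ρ ^ (m + 1)) • (B ^ m) w := by
  have hAB' (v : E) : A (B v) = B (A v) + (1 - ρ) • C v := by
    simpa using congr($hAB v)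
  induction m with
  | zero => simp [hAB', hAw, hCw]
  | succ m ih =>
    have hCBm : C ((B ^ (m + 1)) w) = ρ ^ (m + 1) • (B ^ (m + 1)) w := by
      rw [← mul_apply_eq_comp, mul_pow_eq_smul_of_mul_eq_smul hCB, smul_apply,
        mul_apply_eq_comp, hCw]
    rw [pow_succ' B (m + 1), mul_apply_eq_comp, hAB', ih, hCBm, map_smul,
      ← mul_apply_eq_comp B, ← pow_succ']
    module

theorem ContinuousLinearMap.adjoint_eq_smul_adjoint_of_eq_inv_smul {𝕜 E : Type*} [RCLike 𝕜]
    [NormedAddCommGroup E] [InnerProductSpace 𝕜 E] [CompleteSpace E] {c : 𝕜} (hc : c ≠ 0)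
    (hc' : starRingEnd 𝕜 c = c) {P Q : E →L[𝕜] E} (h : P = c⁻¹ • Q) :
    adjoint Q = c • adjoint P := by
  rw [h, map_smulₛₗ, map_inv₀, hc', smul_smul, mul_inv_cancel₀ hc, one_smul]

theorem qPoch_self_succ (a : ℝ) (m : ℕ) :
    qPoch a a (m + 1) = qPoch a a m * (1 - a ^ (m + 1)) := by
  rw [qPoch, Finset.prod_range_succ, ← pow_succ']
  rfl

theorem qPoch_self_pos {a : ℝ} (ha0 : 0 ≤ a) (ha1 : a < 1) (m : ℕ) : 0 < qPoch a a m :=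
  Finset.prod_pos fun i _ => by
    rw [← pow_succ', sub_pos]
    exact pow_lt_one₀ ha0 ha1 i.succ_ne_zero

def sigmaRatio (q : ℝ) {n : ℕ} (i : Fin n) : ℝ := if (i : ℕ) + 1 = n then q ^ 4 else q ^ 2

theorem sigmaRatio_nonneg (q : ℝ) {n : ℕ} (i : Fin n) : 0 ≤ sigmaRatio q i := by
  unfold sigmaRatio
  split_ifs <;> positivity

theorem sigmaRatio_lt_one {q : ℝ} (hq : |q| < 1) {n : ℕ} (i : Fin n) : sigmaRatio q i < 1 := by
  unfold sigmaRatio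
  split_ifs <;>
  · rw [← Even.pow_abs (by decide)]
    exact pow_lt_one₀ (abs_nonneg q) hq (by norm_num)

def ketNormSq (q : ℝ) {n : ℕ} (k : Fin n → ℕ) : ℝ :=
  ∏ i, qPoch (sigmaRatio q i) (sigmaRatio q i) (k i)

theorem ketNormSq_zero (q : ℝ) (n : ℕ) : ketNormSq q (0 : Fin n → ℕ) = 1 := by
  simp [ketNormSq, qPoch]

theorem ketNormSq_pos {q : ℝ} (hq : |q| < 1) {n : ℕ} (k : Fin n → ℕ) : 0 < ketNormSq q k :=
  Finset.prod_pos fun i _ => qPoch_self_pos (sigmaRatio_nonneg q i) (sigmaRatio_lt_one hq i) _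

theorem ketNormSq_update {q : ℝ} {n : ℕ} {k : Fin n → ℕ} {i : Fin n} (hki : k i ≠ 0) :
    (1 - sigmaRatio q i ^ k i) * ketNormSq q (Function.update k i (k i - 1)) = ketNormSq q k := by
  obtain ⟨m, hm⟩ := Nat.exists_eq_add_one.mpr (Nat.pos_of_ne_zero hki)
  rw [ketNormSq, ketNormSq, ← Finset.mul_prod_erase _ _ (Finset.mem_univ i),
    ← Finset.mul_prod_erase _ _ (Finset.mem_univ i), Function.update_self, hm,
    Nat.add_sub_cancel, qPoch_self_succ,
    Finset.prod_congr rfl fun l hl => by rw [Function.update_of_ne (Finset.ne_of_mem_erase hl)]]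
  ring

section

variable {n : ℕ} {H : Type*} [NormedAddCommGroup H] [InnerProductSpace ℂ H] [CompleteSpace H]
  {Y : Fin (n + 1) → H →L[ℂ] H}

def tailSum (Y : Fin (n + 1) → H →L[ℂ] H) (a : Fin (n + 1)) : H →L[ℂ] H :=
  ∑ m ∈ Finset.Ioi a, adjoint (Y m) * Y m

def adjointMonomial (Y : Fin (n + 1) → H →L[ℂ] H) (k : Fin n → ℕ) : H →L[ℂ] H :=
  (List.ofFn fun i : Fin n => adjoint (Y i.castSucc) ^ k i).prod

@[simp]
theorem adjointMonomial_zero : adjointMonomial Y 0 = 1 := by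
  simp [adjointMonomial]

theorem adjointMonomial_eq_pow_mul {k : Fin n → ℕ} {i : Fin n} (hk : ∀ l < i, k l = 0) :
    adjointMonomial Y k
      = adjoint (Y i.castSucc) ^ k i * adjointMonomial Y (Function.update k i 0) := by
  rw [adjointMonomial, List.prod_ofFn_eq_mul_update_one (i := i) fun l hl => by simp [hk l hl]]
  congr 3
  funext l
  rw [Function.apply_update (fun l m => adjoint (Y (Fin.castSucc l)) ^ m), pow_zero]

theorem adjointMonomial_eq_adjoint_mul {k : Fin n → ℕ} {i : Fin n} {m : ℕ}
    (hk : ∀ l < i, k l = 0) (hki : k i = m + 1) :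
    adjointMonomial Y k = adjoint (Y i.castSucc) * adjointMonomial Y (Function.update k i m) := by
  have hk' : ∀ l < i, Function.update k i m l = 0 := fun l hl => by
    rw [Function.update_of_ne hl.ne]
    exact hk l hl
  rw [adjointMonomial_eq_pow_mul hk, adjointMonomial_eq_pow_mul hk', Function.update_idem,
    Function.update_self, hki, pow_succ', mul_assoc]

theorem ket_eq_smul_adjointMonomial (q : ℝ) (ξ : H) (k : Fin n → ℕ) :
    ket q Y ξ k = (((√(ketNormSq q k))⁻¹ : ℝ) : ℂ) • adjointMonomial Y k ξ := by
  rw [ket, ketNormSq]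
  congr 5
  funext i
  unfold sigmaRatio
  split_ifs <;> rfl

end

namespace IsSigmaQFamily

variable {q : ℝ} {n : ℕ} {H : Type*} [NormedAddCommGroup H] [InnerProductSpace ℂ H]
  [CompleteSpace H] {Y : Fin (n + 1) → H →L[ℂ] H} {ξ : H}

theorem mul_adjoint_of_lt (hY : IsSigmaQFamily q Y) (hq : q ≠ 0) {a b : Fin (n + 1)}
    (hba : b < a) (hex : ¬((a : ℕ) = n ∧ (b : ℕ) + 1 = n)) :
    Y a * adjoint (Y b) = (q : ℂ) • (adjoint (Y b) * Y a) := by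
  simpa [← star_eq_adjoint, star_mul] using adjoint_eq_smul_adjoint_of_eq_inv_smul
    (by exact_mod_cast hq) (Complex.conj_ofReal q) (hY.1 a b hba hex).2

theorem mul_adjoint_of_gt (hY : IsSigmaQFamily q Y) (hq : q ≠ 0) {a b : Fin (n + 1)}
    (hba : b < a) (hex : ¬((a : ℕ) = n ∧ (b : ℕ) + 1 = n)) :
    Y b * adjoint (Y a) = (q : ℂ) • (adjoint (Y a) * Y b) :=
  ((eq_inv_smul_iff₀ (by exact_mod_cast hq)).mp (hY.1 a b hba hex).2).symm

theorem adjoint_mul_adjoint_of_lt (hY : IsSigmaQFamily q Y) (hq : q ≠ 0) {a b : Fin (n + 1)}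
    (hba : b < a) (hex : ¬((a : ℕ) = n ∧ (b : ℕ) + 1 = n)) :
    adjoint (Y a) * adjoint (Y b) = (q : ℂ) • (adjoint (Y b) * adjoint (Y a)) := by
  simpa [← star_eq_adjoint, star_mul] using adjoint_eq_smul_adjoint_of_eq_inv_smul
    (by exact_mod_cast hq) (Complex.conj_ofReal q) (hY.1 a b hba hex).1

theorem last_mul_adjoint (hY : IsSigmaQFamily q Y) (hq : q ≠ 0) {b : Fin (n + 1)}
    (hb : (b : ℕ) + 1 = n) :
    Y (Fin.last n) * adjoint (Y b) = (q : ℂ) ^ 2 • (adjoint (Y b) * Y (Fin.last n)) := by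
  have h := (hY.2.1 b hb).2
  rw [inv_pow] at h
  simpa [← star_eq_adjoint, star_mul] using adjoint_eq_smul_adjoint_of_eq_inv_smul
    (by exact_mod_cast pow_ne_zero 2 hq) (by simp) h

theorem adjoint_last_mul_adjoint (hY : IsSigmaQFamily q Y) (hq : q ≠ 0) {b : Fin (n + 1)}
    (hb : (b : ℕ) + 1 = n) :
    adjoint (Y (Fin.last n)) * adjoint (Y b)
      = (q : ℂ) ^ 2 • (adjoint (Y b) * adjoint (Y (Fin.last n))) := by
  have h := (hY.2.1 b hb).1
  rw [inv_pow] at h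
  simpa [← star_eq_adjoint, star_mul] using adjoint_eq_smul_adjoint_of_eq_inv_smul
    (by exact_mod_cast pow_ne_zero 2 hq) (by simp) h

theorem mul_adjoint_castSucc_of_ne (hY : IsSigmaQFamily q Y) (hq : q ≠ 0) {a b : Fin n}
    (hab : a ≠ b) :
    Y a.castSucc * adjoint (Y b.castSucc)
      = (q : ℂ) • (adjoint (Y b.castSucc) * Y a.castSucc) := by
  have hex (c : Fin n) (d : Fin (n + 1)) : ¬((c.castSucc : ℕ) = n ∧ (d : ℕ) + 1 = n) :=
    fun h => c.isLt.ne h.1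
  rcases hab.lt_or_gt with h | h
  · exact hY.mul_adjoint_of_gt hq (Fin.castSucc_lt_castSucc_iff.mpr h) (hex _ _)
  · exact hY.mul_adjoint_of_lt hq (Fin.castSucc_lt_castSucc_iff.mpr h) (hex _ _)

theorem mul_adjoint_self_castSucc (hY : IsSigmaQFamily q Y) (i : Fin n) :
    Y i.castSucc * adjoint (Y i.castSucc)
      = adjoint (Y i.castSucc) * Y i.castSucc
        + ((1 - sigmaRatio q i : ℝ) : ℂ) • tailSum Y i.castSucc := by
  rw [← sub_eq_iff_eq_add', sigmaRatio, tailSum]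
  split_ifs with h
  · rw [hY.2.2.2.1 i.castSucc h, Fin.Ioi_castSucc_eq_singleton_last h, Finset.sum_singleton]
  · exact hY.2.2.1 i.castSucc h

theorem tailSum_castSucc_mul_adjoint (hY : IsSigmaQFamily q Y) (hq : q ≠ 0) (i : Fin n) :
    tailSum Y i.castSucc * adjoint (Y i.castSucc)
      = (sigmaRatio q i : ℂ) • (adjoint (Y i.castSucc) * tailSum Y i.castSucc) := by
  rw [tailSum, sigmaRatio]
  split_ifs with h
  · rw [Fin.Ioi_castSucc_eq_singleton_last h, Finset.sum_singleton,
      mul_mul_eq_smul_of_mul_eq_smul' (hY.adjoint_last_mul_adjoint hq h)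
        (hY.last_mul_adjoint hq h)]
    congr 1
    push_cast
    ring
  · rw [Finset.sum_mul, Finset.mul_sum, Finset.smul_sum]
    refine Finset.sum_congr rfl fun m hm => ?_
    have hlt := Finset.mem_Ioi.mp hm
    have hex : ¬((m : ℕ) = n ∧ (i.castSucc : ℕ) + 1 = n) := fun hc => h hc.2
    rw [mul_mul_eq_smul_of_mul_eq_smul' (hY.adjoint_mul_adjoint_of_lt hq hlt hex)
      (hY.mul_adjoint_of_lt hq hlt hex)]
    congr 1
    push_cast
    ring

theorem apply_adjointMonomial_eq_zero (hY : IsSigmaQFamily q Y) (hq : q ≠ 0)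
    (hann : ∀ i : Fin n, Y i.castSucc ξ = 0) {a : Fin n} {k : Fin n → ℕ} (hka : k a = 0) :
    Y a.castSucc (adjointMonomial Y k ξ) = 0 := by
  have hcomm : Y a.castSucc * adjointMonomial Y k
      = (∏ l, (q : ℂ) ^ k l) • (adjointMonomial Y k * Y a.castSucc) := by
    refine mul_prod_ofFn_eq_smul fun l => ?_
    rcases eq_or_ne a l with rfl | hal
    · simp [hka]
    · exact mul_pow_eq_smul_of_mul_eq_smul (hY.mul_adjoint_castSucc_of_ne hq hal) _
  rw [← mul_apply_eq_comp, hcomm, smul_apply, mul_apply_eq_comp, hann, map_zero, smul_zero]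

theorem tailSum_apply_adjointMonomial (hY : IsSigmaQFamily q Y) (hq : q ≠ 0)
    (hann : ∀ i : Fin n, Y i.castSucc ξ = 0) {i : Fin n} {k : Fin n → ℕ}
    (hk : ∀ l ≤ i, k l = 0) :
    tailSum Y i.castSucc (adjointMonomial Y k ξ) = adjointMonomial Y k ξ := by
  conv_rhs =>
    rw [← one_apply_eq_self (F := H →L[ℂ] H) (adjointMonomial Y k ξ), ← hY.2.2.2.2]
  simp only [tailSum, sum_apply, mul_apply_eq_comp]
  refine Finset.sum_subset (Finset.subset_univ _) fun m _ hm => ?_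
  have hmi : m ≤ i.castSucc := not_lt.mp (by simpa using hm)
  obtain ⟨l, rfl⟩ := Fin.exists_castSucc_eq.mpr (hmi.trans_lt (Fin.castSucc_lt_last i)).ne
  rw [hY.apply_adjointMonomial_eq_zero hq hann (hk l (Fin.castSucc_le_castSucc_iff.mp hmi)),
    map_zero]

theorem apply_adjointMonomial (hY : IsSigmaQFamily q Y) (hq : q ≠ 0)
    (hann : ∀ i : Fin n, Y i.castSucc ξ = 0) {i : Fin n} {k : Fin n → ℕ}
    (hk : ∀ l < i, k l = 0) :
    Y i.castSucc (adjointMonomial Y k ξ)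
      = ((1 - sigmaRatio q i ^ k i : ℝ) : ℂ)
          • adjointMonomial Y (Function.update k i (k i - 1)) ξ := by
  cases hki : k i with
  | zero => simp [hY.apply_adjointMonomial_eq_zero hq hann hki]
  | succ m =>
    have hk0 : ∀ l ≤ i, Function.update k i 0 l = 0 := fun l hl => by
      rcases hl.lt_or_eq with hl | rfl
      · rw [Function.update_of_ne hl.ne, hk l hl]
      · exact Function.update_self ..
    have hkm : ∀ l < i, Function.update k i m l = 0 := fun l hl => by
      rw [Function.update_of_ne hl.ne, hk l hl]
    have hAB : Y i.castSucc * adjoint (Y i.castSucc)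
        = adjoint (Y i.castSucc) * Y i.castSucc
          + (1 - (sigmaRatio q i : ℂ)) • tailSum Y i.castSucc := by
      exact_mod_cast hY.mul_adjoint_self_castSucc i
    have hlower := apply_pow_succ_apply_of_mul_eq_add hAB (hY.tailSum_castSucc_mul_adjoint hq i)
      (hY.apply_adjointMonomial_eq_zero hq hann (hk0 i le_rfl))
      (hY.tailSum_apply_adjointMonomial hq hann hk0) m
    rw [adjointMonomial_eq_pow_mul hk, hki, mul_apply_eq_comp, hlower, Nat.add_sub_cancel,
      adjointMonomial_eq_pow_mul hkm, Function.update_idem, Function.update_self,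
      mul_apply_eq_comp]
    push_cast
    rfl

theorem inner_adjointMonomial_eq_zero (hY : IsSigmaQFamily q Y) (hq : q ≠ 0)
    (hann : ∀ i : Fin n, Y i.castSucc ξ = 0) {j k : Fin n → ℕ} {i : Fin n}
    (hk : ∀ l < i, k l = 0) (hji : j i = 0) (hki : k i ≠ 0) :
    inner ℂ (adjointMonomial Y j ξ) (adjointMonomial Y k ξ) = 0 := by
  rw [adjointMonomial_eq_adjoint_mul hk (Nat.sub_one_add_one hki).symm, mul_apply_eq_comp,
    adjoint_inner_right, hY.apply_adjointMonomial_eq_zero hq hann hji, inner_zero_left]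

theorem inner_adjointMonomial_eq_mul (hY : IsSigmaQFamily q Y) (hq : q ≠ 0)
    (hann : ∀ i : Fin n, Y i.castSucc ξ = 0) {j k : Fin n → ℕ} {i : Fin n}
    (hj : ∀ l < i, j l = 0) (hk : ∀ l < i, k l = 0) (hji : j i ≠ 0) :
    inner ℂ (adjointMonomial Y j ξ) (adjointMonomial Y k ξ)
      = ((1 - sigmaRatio q i ^ k i : ℝ) : ℂ) * inner ℂ
          (adjointMonomial Y (Function.update j i (j i - 1)) ξ)
          (adjointMonomial Y (Function.update k i (k i - 1)) ξ) := by
  rw [adjointMonomial_eq_adjoint_mul hj (Nat.sub_one_add_one hji).symm, mul_apply_eq_comp,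
    adjoint_inner_left, hY.apply_adjointMonomial hq hann hk, inner_smul_right]

theorem inner_adjointMonomial (hY : IsSigmaQFamily q Y) (hq : q ≠ 0) (hξ : ‖ξ‖ = 1)
    (hann : ∀ i : Fin n, Y i.castSucc ξ = 0) (j k : Fin n → ℕ) :
    inner ℂ (adjointMonomial Y j ξ) (adjointMonomial Y k ξ)
      = if j = k then (ketNormSq q k : ℂ) else 0 := by
  induction hs : ∑ l, (j l + k l) using Nat.strong_induction_on generalizing j k with
  | _ s ih =>
  by_cases hzero : ∀ l, j l + k l = 0
  · obtain rfl : j = 0 := funext fun l => (Nat.add_eq_zero_iff.mp (hzero l)).1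
    obtain rfl : k = 0 := funext fun l => (Nat.add_eq_zero_iff.mp (hzero l)).2
    simp [ketNormSq_zero, hξ]
  push Not at hzero
  obtain ⟨i, hi, hmin⟩ := WellFounded.has_min wellFounded_lt {l | j l + k l ≠ 0} hzero
  have hj : ∀ l < i, j l = 0 := fun l hl => by have := hmin l; simp_all
  have hk : ∀ l < i, k l = 0 := fun l hl => by have := hmin l; simp_all
  by_cases hji : j i = 0
  · have hki : k i ≠ 0 := by simp_all
    rw [hY.inner_adjointMonomial_eq_zero hq hann hk hji hki,
      if_neg fun h : j = k => hki (h ▸ hji)]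
  rw [hY.inner_adjointMonomial_eq_mul hq hann hj hk hji,
    ih _ (hs ▸ Finset.sum_update_pred_lt hji) _ _ rfl]
  by_cases hki : k i = 0
  · simp [hki, if_neg fun h : j = k => hji (h ▸ hki)]
  simp only [Function.update_pred_eq_update_pred_iff hji hki]
  split_ifs
  · exact_mod_cast ketNormSq_update hki
  · simp

end IsSigmaQFamily

theorem ket_orthonormal_general (q : ℝ) (hq0 : 0 < q) (hq1 : q < 1) (n : ℕ)
    {H : Type*} [NormedAddCommGroup H] [InnerProductSpace ℂ H] [CompleteSpace H]
    (Y : Fin (n + 1) → H →L[ℂ] H) (hY : IsSigmaQFamily q Y)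
    (ξ : H) (hξ : ‖ξ‖ = 1) (hann : ∀ i : Fin n, Y i.castSucc ξ = 0) :
    ∀ j k : Fin n → ℕ,
      (inner ℂ (ket q Y ξ j) (ket q Y ξ k) : ℂ) = if j = k then 1 else 0 := by
  intro j k
  rw [ket_eq_smul_adjointMonomial, ket_eq_smul_adjointMonomial, inner_smul_left,
    inner_smul_right, hY.inner_adjointMonomial hq0.ne' hξ hann, Complex.conj_ofReal]
  split_ifs with hjk
  · subst hjk
    have hN : 0 < ketNormSq q j := ketNormSq_pos (abs_lt.mpr ⟨by linarith, hq1⟩) j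
    have hsq : (√(ketNormSq q j))⁻¹ * ((√(ketNormSq q j))⁻¹ * ketNormSq q j) = 1 := by
      rw [← mul_assoc, ← mul_inv, Real.mul_self_sqrt hN.le, inv_mul_cancel₀ hN.ne']
    exact_mod_cast hsq
  · simp

/-- The family `{|k⟩_ξ : k ∈ ℕⁿ}` is orthonormal. -/
theorem ket_orthonormal (q : ℝ) (hq0 : 0 < q) (hq1 : q < 1) (n : ℕ) (hn : 1 ≤ n)
    {H : Type*} [NormedAddCommGroup H] [InnerProductSpace ℂ H] [CompleteSpace H]
    (Y : Fin (n + 1) → H →L[ℂ] H) (hY : IsSigmaQFamily q Y)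
    (ξ : H) (hξ : ‖ξ‖ = 1) (hann : ∀ i : Fin n, Y i.castSucc ξ = 0)
    (lam : ℂ) (hev : Y (Fin.last n) ξ = lam • ξ) (hlam : ‖lam‖ = 1) :
    ∀ j k : Fin n → ℕ,
      (inner ℂ (ket q Y ξ j) (ket q Y ξ k) : ℂ) = if j = k then 1 else 0 :=
  ket_orthonormal_general q hq0 hq1 n Y hY ξ hξ hann
end
end

section
/- For every real number q with 0<q<1, every integer n≥1 and every λ∈ℂ with |λ|=1, the operators of the representation π_λ on ℓ²(ℕⁿ) satisfy the sphere relation Σ_{i=1}^{n+1} π_λ(Y_i)* π_λ(Y_i) = 1 (the identity operator on ℓ²(ℕⁿ)). -/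
open ContinuousLinearMap

noncomputable section

/-!
Each `π_λ(Y_i)` with `i ≤ n` sends `e_k` to `c_i(k) e_{k - 𝐞_i}`, and two basis vectors with the
same image have `c_i = 0` on one of them, while `π_λ(Y_{n+1})` is diagonal; hence every
`π_λ(Y_i)* π_λ(Y_i)` is diagonal with entries `|c_i(k)|²`. Writing `x_j = q^{2k_j}` for `j < n` and
`x_n = q^{4k_n}`, these entries are `x_1 ⋯ x_{i-1} (1 - x_i)` and, for `i = n + 1`, `x_1 ⋯ x_n`,
which telescope to `1`.
-/

namespace lp

variable {𝕜 ι : Type*} [RCLike 𝕜] [DecidableEq ι]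

theorem ext_single_one {f g : ℓ²(ι, 𝕜) →L[𝕜] ℓ²(ι, 𝕜)}
    (h : ∀ i, f (lp.single 2 i 1) = g (lp.single 2 i 1)) : f = g :=
  lp.ext_continuousLinearMap ENNReal.ofNat_ne_top fun i => ContinuousLinearMap.ext_ring (h i)

theorem inner_single_one_left (i : ι) (f : ℓ²(ι, 𝕜)) :
    inner 𝕜 (lp.single 2 i (1 : 𝕜)) f = f i := by
  simp [lp.inner_single_left]

theorem inner_single_one_single_one (i j : ι) :
    inner 𝕜 (lp.single 2 i (1 : 𝕜) : ℓ²(ι, 𝕜)) (lp.single 2 j 1) = if i = j then 1 else 0 := by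
  rw [inner_single_one_left, lp.single_apply, Pi.single_apply, eq_comm]

theorem adjoint_mul_self_single_one {A : ℓ²(ι, 𝕜) →L[𝕜] ℓ²(ι, 𝕜)} {c : ι → 𝕜} {σ : ι → ι}
    (hA : ∀ k, A (lp.single 2 k 1) = c k • lp.single 2 (σ k) 1)
    (hσ : ∀ k l, σ k = σ l → c k ≠ 0 → c l ≠ 0 → k = l) (k : ι) :
    (adjoint A * A) (lp.single 2 k 1) = ((‖c k‖ ^ 2 : ℝ) : 𝕜) • lp.single 2 k 1 := by
  refine lp.ext (funext fun l => ?_)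
  rw [← inner_single_one_left, ← inner_single_one_left, mul_apply_eq_comp, adjoint_inner_right,
    hA, hA, inner_smul_left, inner_smul_right, inner_smul_right, inner_single_one_single_one,
    inner_single_one_single_one]
  by_cases hlk : l = k
  · subst hlk
    simp [RCLike.conj_mul]
  · by_cases hσlk : σ l = σ k
    · rcases eq_or_ne (c l) 0 with hl | hl
      · simp [hl, hlk]
      · rcases eq_or_ne (c k) 0 with hk | hk
        · simp [hk, hlk]
        · exact absurd (hσ l k hσlk hl hk) hlk
    · simp [hσlk, hlk]

end lp

theorem Finset.sum_prod_Iio_mul_one_sub_add_prod {ι R : Type*} [Fintype ι] [LinearOrder ι]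
    [LocallyFiniteOrderBot ι] [CommRing R] (x : ι → R) :
    ∑ i, (∏ j ∈ Finset.Iio i, x j) * (1 - x i) + ∏ i, x i = 1 := by
  have h := Finset.prod_one_sub_ordered Finset.univ (fun i => 1 - x i)
  simp only [sub_sub_cancel, Finset.filter_gt_eq_Iio] at h
  rw [h]
  simp [mul_comm]

theorem Function.eq_of_update_pred_eq {ι : Type*} [DecidableEq ι] {k l : ι → ℕ} {i : ι}
    (h : Function.update k i (k i - 1) = Function.update l i (l i - 1)) (hk : k i ≠ 0)
    (hl : l i ≠ 0) : k = l := by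
  have hi : k i = l i := by
    have := congrFun h i
    simp only [Function.update_self] at this
    omega
  calc k = Function.update (Function.update k i (k i - 1)) i (k i) := by simp
    _ = Function.update (Function.update l i (l i - 1)) i (l i) := by rw [h, hi]
    _ = l := by simp

def piRepExponent {n : ℕ} (k : Fin n → ℕ) (j : Fin n) : ℕ :=
  if (j : ℕ) + 1 = n then 2 * k j else k j

theorem piRepExponent_of_lt {n : ℕ} (k : Fin n → ℕ) {i j : Fin n} (h : j < i) :
    piRepExponent k j = k j :=
  if_neg (by omega)

theorem piRepExponent_eq_zero {n : ℕ} {k : Fin n → ℕ} {i : Fin n} (h : k i = 0) :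
    piRepExponent k i = 0 := by
  simp [piRepExponent, h]

namespace IsPiRep

variable {q : ℝ} {n : ℕ} {lam : ℂ} {Y : Fin (n + 1) → lpH n →L[ℂ] lpH n}

theorem apply_castSucc (hY : IsPiRep q lam Y) (i : Fin n) (k : Fin n → ℕ) :
    Y i.castSucc (basisE k)
      = ((q ^ (∑ j ∈ Finset.Iio i, piRepExponent k j)
          * √(1 - (q ^ 2) ^ piRepExponent k i) : ℝ) : ℂ)
        • basisE (Function.update k i (k i - 1)) := by
  rw [Finset.sum_congr rfl fun j hj => piRepExponent_of_lt k (Finset.mem_Iio.1 hj), ← pow_mul]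
  rcases (Nat.succ_le_of_lt i.isLt).lt_or_eq with h | h
  · rw [hY.1 i h k, piRepExponent, if_neg h.ne]
  · rw [hY.2.1 i h k, piRepExponent, if_pos h, ← mul_assoc]
    norm_num

theorem apply_last (hY : IsPiRep q lam Y) (k : Fin n → ℕ) :
    Y (Fin.last n) (basisE k) = (lam * (q : ℂ) ^ ∑ j, piRepExponent k j) • basisE k :=
  hY.2.2 k

theorem adjoint_mul_self_castSucc (hY : IsPiRep q lam Y) (hq0 : 0 ≤ q) (hq1 : q ≤ 1)
    (i : Fin n) (k : Fin n → ℕ) :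
    (adjoint (Y i.castSucc) * Y i.castSucc) (basisE k)
      = (((∏ j ∈ Finset.Iio i, (q ^ 2) ^ piRepExponent k j)
          * (1 - (q ^ 2) ^ piRepExponent k i) : ℝ) : ℂ) • basisE k := by
  rw [basisE, lp.adjoint_mul_self_single_one (hY.apply_castSucc i) ?_ k,
    RCLike.ofReal_eq_complex_ofReal]
  · rw [Complex.norm_real, Real.norm_eq_abs, sq_abs, mul_pow,
      Real.sq_sqrt (sub_nonneg.2 (pow_le_one₀ (by positivity) (pow_le_one₀ hq0 hq1))),
      Finset.prod_pow_eq_pow_sum, pow_right_comm]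
  · intro k l hkl hk hl
    refine Function.eq_of_update_pred_eq hkl ?_ ?_
    · contrapose! hk
      simp [piRepExponent_eq_zero hk]
    · contrapose! hl
      simp [piRepExponent_eq_zero hl]

theorem adjoint_mul_self_last (hY : IsPiRep q lam Y) (hlam : ‖lam‖ = 1) (hq0 : 0 ≤ q)
    (k : Fin n → ℕ) :
    (adjoint (Y (Fin.last n)) * Y (Fin.last n)) (basisE k)
      = ((∏ j, (q ^ 2) ^ piRepExponent k j : ℝ) : ℂ) • basisE k := by
  rw [basisE, lp.adjoint_mul_self_single_one hY.apply_last (σ := id) (fun _ _ h _ _ => h) k,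
    RCLike.ofReal_eq_complex_ofReal, norm_mul, hlam, one_mul, norm_pow, Complex.norm_real,
    Real.norm_of_nonneg hq0, pow_right_comm, Finset.prod_pow_eq_pow_sum]

end IsPiRep

theorem piRep_sphere_relation_general (q : ℝ) (hq0 : 0 < q) (hq1 : q < 1) (n : ℕ)
    (lam : ℂ) (hlam : ‖lam‖ = 1) (Y : Fin (n + 1) → lpH n →L[ℂ] lpH n)
    (hY : IsPiRep q lam Y) :
    ∑ i, adjoint (Y i) * Y i = 1 := by
  refine lp.ext_single_one fun k => ?_
  change (∑ i, adjoint (Y i) * Y i) (basisE k) = basisE k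
  rw [sum_apply, Fin.sum_univ_castSucc]
  simp only [hY.adjoint_mul_self_castSucc hq0.le hq1.le, hY.adjoint_mul_self_last hlam hq0.le]
  rw [← Finset.sum_smul, ← add_smul, ← Complex.ofReal_sum, ← Complex.ofReal_add,
    Finset.sum_prod_Iio_mul_one_sub_add_prod, Complex.ofReal_one, one_smul]

/-- The operators of `π_λ` satisfy the sphere relation `∑ᵢ Yᵢ* Yᵢ = 1`. -/
theorem piRep_sphere_relation (q : ℝ) (hq0 : 0 < q) (hq1 : q < 1) (n : ℕ) (hn : 1 ≤ n)
    (lam : ℂ) (hlam : ‖lam‖ = 1) (Y : Fin (n + 1) → lpH n →L[ℂ] lpH n)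
    (hY : IsPiRep q lam Y) :
    ∑ i, adjoint (Y i) * Y i = 1 :=
  piRep_sphere_relation_general q hq0 hq1 n lam hlam Y hY
end
end
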